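/- arXiv:2307.09768 — 4 statements merged into one kernel-verified Lean document; each statement's English description precedes it below -/
import Mathlib

section
/- For every pair of adjacent vertices i, j of a finite connected simple graph in which every vertex has degree at least 1, the Ollivier–Ricci curvature satisfies κ(i,j) ≥ −2·(1 − 1/d_i − 1/d_j)₊, where s₊ = max(s, 0). -/
/-!
Every coupling `Γ` of `m_i` and `m_j` lives on `N(i) × N(j)`. There the distance is at most `3`
(through the path `u ~ i ~ j ~ v`), and at most `1` in row `j` and in column `i`, so the cost of `Γ`
is at most `3 - 2 (1/d_i + 1/d_j - Γ(j, i))`. The corner `Γ(j, i)` must carry at least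
`(1/d_i + 1/d_j - 1)₊`, and a coupling attaining this minimum, glued from rank-one plans,
gives `W₁(i, j) ≤ 1 + 2 (1 - 1/d_i - 1/d_j)₊`.
-/

open Finset

/-- The probability measure at node `i`: uniform on the neighbors of `i`. -/
noncomputable def massDist {V : Type*} [Fintype V] (G : SimpleGraph V)
    [DecidableRel G.Adj] (i u : V) : ℝ :=
  if G.Adj i u then 1 / (G.degree i : ℝ) else 0

/-- `Γ` is a coupling of the measures `massDist G i` and `massDist G j`. -/
def IsCoupling {V : Type*} [Fintype V] (G : SimpleGraph V) [DecidableRel G.Adj]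
    (i j : V) (Γ : V → V → ℝ) : Prop :=
  (∀ u v, 0 ≤ Γ u v) ∧
  (∀ u, ∑ v, Γ u v = massDist G i u) ∧
  (∀ v, ∑ u, Γ u v = massDist G j v)

/-- The L¹-Wasserstein distance between the neighborhood measures of `i` and `j`,
with respect to the shortest-path distance. -/
noncomputable def wassersteinW1 {V : Type*} [Fintype V] (G : SimpleGraph V)
    [DecidableRel G.Adj] (i j : V) : ℝ :=
  sInf { c : ℝ | ∃ Γ : V → V → ℝ, IsCoupling G i j Γ ∧
    c = ∑ u, ∑ v, Γ u v * (G.dist u v : ℝ) }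

/-- The Ollivier–Ricci curvature of the edge `{i, j}` (for adjacent `i`, `j`,
so that `d(i,j) = 1`). -/
noncomputable def ollivierRicci {V : Type*} [Fintype V] (G : SimpleGraph V)
    [DecidableRel G.Adj] (i j : V) : ℝ :=
  1 - wassersteinW1 G i j


structure IsTransportPlan {α : Type*} [Fintype α] (μ ν : α → ℝ) (Γ : α → α → ℝ) : Prop where
  nonneg : ∀ u v, 0 ≤ Γ u v
  sum_row : ∀ u, ∑ v, Γ u v = μ u
  sum_col : ∀ v, ∑ u, Γ u v = ν v

section TransportPlan

variable {α : Type*} [Fintype α]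

namespace IsTransportPlan

variable {μ ν μ' ν' : α → ℝ} {Γ Γ' : α → α → ℝ}

theorem add (h : IsTransportPlan μ ν Γ) (h' : IsTransportPlan μ' ν' Γ') :
    IsTransportPlan (μ + μ') (ν + ν') (Γ + Γ') where
  nonneg u v := add_nonneg (h.nonneg u v) (h'.nonneg u v)
  sum_row u := by simp only [Pi.add_apply, sum_add_distrib, h.sum_row, h'.sum_row]
  sum_col v := by simp only [Pi.add_apply, sum_add_distrib, h.sum_col, h'.sum_col]

theorem left_ne_zero (h : IsTransportPlan μ ν Γ) {u v : α} (huv : Γ u v ≠ 0) : μ u ≠ 0 :=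
  fun hu => huv <| le_antisymm
    (hu ▸ h.sum_row u ▸ single_le_sum (fun w _ => h.nonneg u w) (mem_univ v)) (h.nonneg u v)

theorem right_ne_zero (h : IsTransportPlan μ ν Γ) {u v : α} (huv : Γ u v ≠ 0) : ν v ≠ 0 :=
  fun hv => huv <| le_antisymm
    (hv ▸ h.sum_col v ▸ single_le_sum (fun w _ => h.nonneg w v) (mem_univ u)) (h.nonneg u v)

theorem sum_sum (h : IsTransportPlan μ ν Γ) : ∑ u, ∑ v, Γ u v = ∑ u, μ u :=
  sum_congr rfl fun u _ => h.sum_row u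

theorem sum_sum_ite_or [DecidableEq α] (h : IsTransportPlan μ ν Γ) (p q : α) :
    ∑ u, ∑ v, (if u = p ∨ v = q then Γ u v else 0) = μ p + ν q - Γ p q := by
  have hsplit : ∀ u v, (if u = p ∨ v = q then Γ u v else 0) =
      (if u = p then Γ u v else 0) + (if v = q then Γ u v else 0) -
        (if u = p then (if v = q then Γ u v else 0) else 0) := by
    intro u v; by_cases hu : u = p <;> by_cases hv : v = q <;> simp [hu, hv]
  simp only [hsplit, sum_add_distrib, sum_sub_distrib, sum_ite_eq', mem_univ, if_true]
  rw [sum_comm (f := fun u v => if u = p then Γ u v else 0),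
    sum_comm (f := fun u v => if u = p then (if v = q then Γ u v else 0) else 0)]
  simp only [sum_ite_eq', mem_univ, if_true, h.sum_row, h.sum_col]

end IsTransportPlan

-- If the common mass vanishes then `f = g = 0`, and `x / 0 = 0` keeps the formula valid.
theorem isTransportPlan_mul_div_sum {f g : α → ℝ} (hf : 0 ≤ f) (hg : 0 ≤ g)
    (hfg : ∑ u, f u = ∑ v, g v) :
    IsTransportPlan f g fun u v => f u * g v / ∑ w, f w := by
  have hf0 : ∑ w, f w = 0 → f = 0 := (Fintype.sum_eq_zero_iff_of_nonneg hf).mp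
  have hg0 : ∑ w, f w = 0 → g = 0 := fun h => (Fintype.sum_eq_zero_iff_of_nonneg hg).mp (hfg ▸ h)
  refine ⟨fun u v => div_nonneg (mul_nonneg (hf u) (hg v)) (sum_nonneg fun w _ => hf w),
    fun u => ?_, fun v => ?_⟩
  · rw [← sum_div, ← mul_sum, ← hfg, mul_div_assoc]
    rcases eq_or_ne (∑ w, f w) 0 with h0 | h0
    · simp [hf0 h0]
    · rw [div_self h0, mul_one]
  · rw [← sum_div, ← sum_mul, mul_div_right_comm]
    rcases eq_or_ne (∑ w, f w) 0 with h0 | h0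
    · simp [hg0 h0]
    · rw [div_self h0, one_mul]

theorem exists_isTransportPlan_apply_eq [DecidableEq α] {μ ν : α → ℝ} (hμ : 0 ≤ μ) (hν : 0 ≤ ν)
    (hμν : ∑ u, μ u = ∑ v, ν v) (p q : α) :
    ∃ Γ, IsTransportPlan μ ν Γ ∧ Γ p q = max (μ p + ν q - ∑ u, μ u) 0 := by
  set m := ∑ u, μ u
  set a := μ p
  set b := ν q
  set x := max (a + b - m) 0
  set μ₀ := μ - Pi.single p a
  set ν₀ := ν - Pi.single q b
  set c := (a - x) / (m - b)
  have ha : 0 ≤ a := hμ p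
  have hb : 0 ≤ b := hν q
  have ham : a ≤ m := single_le_sum (fun u _ => hμ u) (mem_univ p)
  have hbm : b ≤ m := hμν ▸ single_le_sum (fun v _ => hν v) (mem_univ q)
  have hx : 0 ≤ x := le_max_right _ _
  have hxa : x ≤ a := max_le (by linarith) ha
  have hxb : x ≤ b := max_le (by linarith) hb
  have hc : 0 ≤ c := div_nonneg (by linarith) (by linarith)
  have hc1 : c ≤ 1 := div_le_one_of_le₀ (by linarith [le_max_left (a + b - m) 0]) (by linarith)
  have hcm : c * (m - b) = a - x :=
    div_mul_cancel_of_imp fun h => by simp [x, show b = m by linarith, ha]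
  have hμ₀ : 0 ≤ μ₀ := fun u => by
    by_cases hu : u = p
    · simp [μ₀, hu, a]
    · simpa [μ₀, hu] using hμ u
  have hν₀ : 0 ≤ ν₀ := fun v => by
    by_cases hv : v = q
    · simp [ν₀, hv, b]
    · simpa [ν₀, hv] using hν v
  have hsum_μ₀ : ∑ u, μ₀ u = m - a := by simp [μ₀, sum_sub_distrib, m]
  have hsum_ν₀ : ∑ v, ν₀ v = m - b := by simp [ν₀, sum_sub_distrib, hμν]
  -- Three rank-one plans: `x` at `(p, q)`; the rest `a - x` of row `p` against the share `c` of
  -- `ν₀`; `μ₀` against what is left of `ν`. Only the first one puts mass at `(p, q)`.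
  have h₁ := isTransportPlan_mul_div_sum (f := Pi.single p x) (g := Pi.single q x)
    (Pi.single_nonneg.2 hx) (Pi.single_nonneg.2 hx) (by simp)
  have h₂ := isTransportPlan_mul_div_sum (f := Pi.single p (a - x)) (g := c • ν₀)
    (Pi.single_nonneg.2 (sub_nonneg.2 hxa)) (smul_nonneg hc hν₀)
    (by simp only [Fintype.sum_pi_single', Pi.smul_apply, smul_eq_mul, ← mul_sum, hsum_ν₀, hcm])
  have h₃ := isTransportPlan_mul_div_sum (f := μ₀) (g := Pi.single q (b - x) + (1 - c) • ν₀)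
    hμ₀ (add_nonneg (Pi.single_nonneg.2 (sub_nonneg.2 hxb)) (smul_nonneg (sub_nonneg.2 hc1) hν₀))
    (by
      simp only [Pi.add_apply, Pi.smul_apply, smul_eq_mul, sum_add_distrib, Fintype.sum_pi_single',
        ← mul_sum, hsum_ν₀, hsum_μ₀]
      linear_combination hcm)
  have hμ_eq : Pi.single p x + Pi.single p (a - x) + μ₀ = μ := by
    rw [← Pi.single_add, add_sub_cancel, add_sub_cancel]
  have hν_eq : Pi.single q x + c • ν₀ + (Pi.single q (b - x) + (1 - c) • ν₀) = ν := by
    ext v; by_cases hv : v = q <;> simp [ν₀, hv] <;> ring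
  refine ⟨_, hμ_eq ▸ hν_eq ▸ (h₁.add h₂).add h₃, ?_⟩
  simp [μ₀, ν₀, a, b, mul_self_div_self]

end TransportPlan

section massDist

variable {V : Type*} [Fintype V] (G : SimpleGraph V) [DecidableRel G.Adj] {i u : V}

theorem massDist_nonneg (i : V) : 0 ≤ massDist G i := fun u => by
  unfold massDist; split_ifs <;> positivity

theorem massDist_of_adj (h : G.Adj i u) : massDist G i u = 1 / G.degree i := if_pos h

theorem adj_of_massDist_ne_zero (h : massDist G i u ≠ 0) : G.Adj i u := by
  by_contra hn; exact h (if_neg hn)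

theorem sum_massDist (h : G.Adj i u) : ∑ w, massDist G i w = 1 := by
  have hdeg : (G.degree i : ℝ) ≠ 0 :=
    Nat.cast_ne_zero.2 ((G.degree_pos_iff_exists_adj i).2 ⟨u, h⟩).ne'
  simp only [massDist, sum_ite, sum_const_zero, add_zero, sum_const, ← G.neighborFinset_eq_filter,
    G.card_neighborFinset_eq_degree, nsmul_eq_mul, mul_one_div_cancel hdeg]

theorem isCoupling_iff {i j : V} {Γ : V → V → ℝ} :
    IsCoupling G i j Γ ↔ IsTransportPlan (massDist G i) (massDist G j) Γ :=
  ⟨fun ⟨h₁, h₂, h₃⟩ => ⟨h₁, h₂, h₃⟩, fun h => ⟨h.nonneg, h.sum_row, h.sum_col⟩⟩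

end massDist

namespace SimpleGraph

variable {V : Type*} {G : SimpleGraph V}

theorem dist_le_of_adj_of_adj_of_adj [DecidableEq V] {i j u v : V} (hu : G.Adj i u)
    (hij : G.Adj i j) (hv : G.Adj j v) : (G.dist u v : ℝ) ≤ if u = j ∨ v = i then 1 else 3 := by
  split_ifs with h
  · rcases h with rfl | rfl
    · simp [dist_eq_one_iff_adj.2 hv]
    · simp [dist_eq_one_iff_adj.2 hu.symm]
  · exact_mod_cast G.dist_le (.cons hu.symm (.cons hij (.cons hv .nil)))

end SimpleGraph

section Curvature

variable {V : Type*} [Fintype V] {G : SimpleGraph V} [DecidableRel G.Adj] {i j : V}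
  {Γ : V → V → ℝ}

theorem wassersteinW1_le_of_isCoupling (hΓ : IsCoupling G i j Γ) :
    wassersteinW1 G i j ≤ ∑ u, ∑ v, Γ u v * G.dist u v :=
  csInf_le ⟨0, by
    rintro c ⟨Γ', hΓ', rfl⟩
    exact sum_nonneg fun u _ => sum_nonneg fun v _ => mul_nonneg (hΓ'.1 u v) (Nat.cast_nonneg _)⟩
    ⟨Γ, hΓ, rfl⟩

theorem sum_sum_mul_dist_le [DecidableEq V] (hij : G.Adj i j)
    (hΓ : IsTransportPlan (massDist G i) (massDist G j) Γ) :
    ∑ u, ∑ v, Γ u v * G.dist u v ≤ 3 - 2 * (1 / G.degree i + 1 / G.degree j - Γ j i) := by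
  have hentry : ∀ u v,
      Γ u v * G.dist u v ≤ 3 * Γ u v - 2 * (if u = j ∨ v = i then Γ u v else 0) := by
    intro u v
    by_cases h0 : Γ u v = 0
    · simp [h0]
    have hd := SimpleGraph.dist_le_of_adj_of_adj_of_adj
      (adj_of_massDist_ne_zero G (hΓ.left_ne_zero h0)) hij
      (adj_of_massDist_ne_zero G (hΓ.right_ne_zero h0))
    calc Γ u v * G.dist u v ≤ Γ u v * (if u = j ∨ v = i then 1 else 3) :=
          mul_le_mul_of_nonneg_left hd (hΓ.nonneg u v)
      _ = 3 * Γ u v - 2 * (if u = j ∨ v = i then Γ u v else 0) := by split_ifs <;> ring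
  calc ∑ u, ∑ v, Γ u v * G.dist u v
      ≤ ∑ u, ∑ v, (3 * Γ u v - 2 * (if u = j ∨ v = i then Γ u v else 0)) :=
        sum_le_sum fun u _ => sum_le_sum fun v _ => hentry u v
    _ = 3 * ∑ u, ∑ v, Γ u v - 2 * ∑ u, ∑ v, (if u = j ∨ v = i then Γ u v else 0) := by
        simp only [sum_sub_distrib, mul_sum]
    _ = 3 - 2 * (1 / G.degree i + 1 / G.degree j - Γ j i) := by
        rw [hΓ.sum_sum, sum_massDist G hij, hΓ.sum_sum_ite_or, massDist_of_adj G hij,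
          massDist_of_adj G hij.symm, mul_one]

end Curvature

theorem ollivierRicci_jost_liu_lower_bound_general
    {V : Type*} [Fintype V] (G : SimpleGraph V) [DecidableRel G.Adj]
    (i j : V) (hij : G.Adj i j) :
    ollivierRicci G i j ≥
      -2 * max (1 - 1 / (G.degree i : ℝ) - 1 / (G.degree j : ℝ)) 0 := by
  classical
  obtain ⟨Γ, hΓ, hΓji⟩ := exists_isTransportPlan_apply_eq (massDist_nonneg G i)
    (massDist_nonneg G j) (by rw [sum_massDist G hij, sum_massDist G hij.symm]) j i
  have hW := (wassersteinW1_le_of_isCoupling ((isCoupling_iff G).2 hΓ)).trans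
    (sum_sum_mul_dist_le hij hΓ)
  rw [hΓji, massDist_of_adj G hij, massDist_of_adj G hij.symm, sum_massDist G hij] at hW
  rw [ollivierRicci]
  rcases le_total (1 / (G.degree i : ℝ) + 1 / (G.degree j : ℝ)) 1 with h | h
  · rw [max_eq_right (by linarith)] at hW
    linarith [le_max_left (1 - 1 / (G.degree i : ℝ) - 1 / (G.degree j : ℝ)) 0]
  · rw [max_eq_left (by linarith)] at hW
    linarith [le_max_right (1 - 1 / (G.degree i : ℝ) - 1 / (G.degree j : ℝ)) 0]

/-- Jost–Liu lower bound for the Ollivier–Ricci curvature. -/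
theorem ollivierRicci_jost_liu_lower_bound
    {V : Type*} [Fintype V] [DecidableEq V] (G : SimpleGraph V) [DecidableRel G.Adj]
    (hconn : G.Connected) (hdeg : ∀ v : V, 1 ≤ G.degree v)
    (i j : V) (hij : G.Adj i j) :
    ollivierRicci G i j ≥
      -2 * max (1 - 1 / (G.degree i : ℝ) - 1 / (G.degree j : ℝ)) 0 :=
  ollivierRicci_jost_liu_lower_bound_general G i j hij
end

section
/- If G is a finite tree (a connected acyclic simple graph) with at least two vertices, then for every pair of adjacent vertices i, j the Ollivier–Ricci curvature attains the Jost–Liu lower bound with equality: κ(i,j) = −2·(1 − 1/d_i − 1/d_j)₊, where s₊ = max(s, 0). -/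
open Finset

open SimpleGraph Walk

section Helpers

variable {V : Type*} {G : SimpleGraph V}

lemma no_common_neighbor (htree : G.IsTree) {i j w : V} (hij : G.Adj i j)
    (h1 : G.Adj i w) (h2 : G.Adj j w) : False := by
  have hp1 : (Walk.cons hij Walk.nil : G.Walk i j).IsPath := by simp [hij.ne]
  have hp2 : (Walk.cons h1 (Walk.cons h2.symm Walk.nil) : G.Walk i j).IsPath := by
    simp [hij.ne, h1.ne, h2.ne']
  have := (htree.existsUnique_path i j).unique hp1 hp2
  simpa using congrArg Walk.length this

lemma not_adj_far (htree : G.IsTree) {i j u v : V} (hij : G.Adj i j)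
    (hu : G.Adj i u) (hv : G.Adj j v) (huj : u ≠ j) (hvi : v ≠ i) : ¬ G.Adj u v := by
  intro hA
  have huv : u ≠ v := hA.ne
  have hp1 : (Walk.cons hu.symm (Walk.cons hij Walk.nil) : G.Walk u j).IsPath := by
    simp [hu.ne', hij.ne, huj]
  have hp2 : (Walk.cons hA (Walk.cons hv.symm Walk.nil) : G.Walk u j).IsPath := by
    simp [huv, hv.ne', huj]
  have := (htree.existsUnique_path u j).unique hp1 hp2
  have := congrArg Walk.support this
  simp at this
  exact hvi this.symm

lemma no_mid (htree : G.IsTree) {i j u v w : V} (hij : G.Adj i j)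
    (hu : G.Adj i u) (hv : G.Adj j v) (huj : u ≠ j) (hvi : v ≠ i)
    (h1 : G.Adj u w) (h2 : G.Adj w v) : False := by
  have hwj : w ≠ j := by
    rintro rfl
    exact no_common_neighbor htree hij hu h1.symm
  have huv : u ≠ v := by
    rintro rfl
    exact no_common_neighbor htree hij hu hv
  have hp1 : (Walk.cons hu.symm (Walk.cons hij Walk.nil) : G.Walk u j).IsPath := by
    simp [hu.ne', hij.ne, huj]
  have hp2 : (Walk.cons h1 (Walk.cons h2 (Walk.cons hv.symm Walk.nil)) : G.Walk u j).IsPath := by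
    simp [h1.ne, h2.ne, hv.ne', huv, huj, hwj]
  have := (htree.existsUnique_path u j).unique hp1 hp2
  simpa using congrArg Walk.length this

lemma dist_eq_three (htree : G.IsTree) {i j u v : V} (hij : G.Adj i j)
    (hu : G.Adj i u) (hv : G.Adj j v) (huj : u ≠ j) (hvi : v ≠ i) : G.dist u v = 3 := by
  have hle : G.dist u v ≤ 3 := by
    simpa using G.dist_le (Walk.cons hu.symm (Walk.cons hij (Walk.cons hv Walk.nil)))
  have hge : 3 ≤ G.dist u v := by
    obtain ⟨p, hp⟩ := (htree.isConnected u v).exists_walk_length_eq_dist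
    rw [← hp]
    rcases p with _ | ⟨h, _ | ⟨h2, _ | ⟨h3, r⟩⟩⟩
    · exact (no_common_neighbor htree hij hu hv).elim
    · exact ((not_adj_far htree hij hu hv huj hvi) h).elim
    · exact (no_mid htree hij hu hv huj hvi h h2).elim
    · simp only [Walk.length_cons]
      omega
  omega



variable {V : Type*}


lemma sum_ite_and_right [Fintype V] [DecidableEq V] (t : Finset V) (P : Prop) [Decidable P] (x : ℝ) :
    ∑ v, (if P ∧ v ∈ t then x else 0) = if P then (t.card : ℝ) * x else 0 := by
  by_cases hP : P
  · simp [hP, Finset.sum_ite_mem, Finset.univ_inter, Finset.sum_const, nsmul_eq_mul]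
  · simp [hP]

lemma sum_ite_and_left [Fintype V] [DecidableEq V] (s : Finset V) (P : Prop) [Decidable P] (x : ℝ) :
    ∑ u, (if u ∈ s ∧ P then x else 0) = if P then (s.card : ℝ) * x else 0 := by
  simp_rw [and_comm]
  exact sum_ite_and_right s P x

lemma sum_sum_ite [Fintype V] [DecidableEq V] (s t : Finset V) (x : ℝ) (f : V → V → ℝ) :
    ∑ u, ∑ v, (if u ∈ s ∧ v ∈ t then x else 0) * f u v = ∑ u ∈ s, ∑ v ∈ t, x * f u v := by
  have h1 : ∀ u, ∑ v, (if u ∈ s ∧ v ∈ t then x else 0) * f u v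
      = if u ∈ s then ∑ v ∈ t, x * f u v else 0 := by
    intro u
    by_cases hu : u ∈ s
    · simp only [hu, true_and, ite_mul, zero_mul, if_true]
      rw [Finset.sum_ite_mem, Finset.univ_inter]
    · simp [hu]
  rw [Finset.sum_congr rfl fun u _ => h1 u, Finset.sum_ite_mem, Finset.univ_inter]

/-- The explicit optimal coupling on a tree. -/
noncomputable def coup [Fintype V] [DecidableEq V] (G : SimpleGraph V) [DecidableRel G.Adj]
    (i j u v : V) : ℝ :=
  (if u ∈ ({j} : Finset V) ∧ v ∈ ({i} : Finset V) then
      max 0 (1 / (G.degree i : ℝ) + 1 / (G.degree j : ℝ) - 1) else 0)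
  + (if u ∈ ({j} : Finset V) ∧ v ∈ (G.neighborFinset j).erase i then
      (1 / (G.degree i : ℝ) - max 0 (1 / (G.degree i : ℝ) + 1 / (G.degree j : ℝ) - 1))
        / ((G.degree j : ℝ) - 1) else 0)
  + (if u ∈ (G.neighborFinset i).erase j ∧ v ∈ ({i} : Finset V) then
      (1 / (G.degree j : ℝ) - max 0 (1 / (G.degree i : ℝ) + 1 / (G.degree j : ℝ) - 1))
        / ((G.degree i : ℝ) - 1) else 0)
  + (if u ∈ (G.neighborFinset i).erase j ∧ v ∈ (G.neighborFinset j).erase i then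
      (1 - 1 / (G.degree i : ℝ) - 1 / (G.degree j : ℝ)
        + max 0 (1 / (G.degree i : ℝ) + 1 / (G.degree j : ℝ) - 1))
        / (((G.degree i : ℝ) - 1) * ((G.degree j : ℝ) - 1)) else 0)

variable [Fintype V] [DecidableEq V] {G : SimpleGraph V} [DecidableRel G.Adj] {i j : V}

lemma coup_nonneg (hij : G.Adj i j) (u v : V) : 0 ≤ coup G i j u v := by
  have hdi : 1 ≤ G.degree i := G.degree_pos_iff_exists_adj i |>.mpr ⟨j, hij⟩
  have hdj : 1 ≤ G.degree j := G.degree_pos_iff_exists_adj j |>.mpr ⟨i, hij.symm⟩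
  set a := 1 / (G.degree i : ℝ) with ha
  set b := 1 / (G.degree j : ℝ) with hb
  have hdi' : (1:ℝ) ≤ (G.degree i : ℝ) := by exact_mod_cast hdi
  have hdj' : (1:ℝ) ≤ (G.degree j : ℝ) := by exact_mod_cast hdj
  have ha0 : 0 ≤ a := by positivity
  have hb0 : 0 ≤ b := by positivity
  have ha1 : a ≤ 1 := by rw [ha]; rw [div_le_one (by linarith)]; linarith
  have hb1 : b ≤ 1 := by rw [hb]; rw [div_le_one (by linarith)]; linarith
  have hc0 : 0 ≤ max 0 (a + b - 1) := le_max_left _ _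
  have hca : max 0 (a + b - 1) ≤ a := max_le ha0 (by linarith)
  have hcb : max 0 (a + b - 1) ≤ b := max_le hb0 (by linarith)
  have h4 : 0 ≤ 1 - a - b + max 0 (a + b - 1) := by
    have := le_max_right 0 (a + b - 1); linarith
  have key : ∀ (P : Prop) [Decidable P] (x : ℝ), 0 ≤ x → 0 ≤ if P then x else 0 := by
    intro P _ x hx; split_ifs <;> simp [hx]
  unfold coup
  refine add_nonneg (add_nonneg (add_nonneg (key _ _ hc0) (key _ _ ?_)) (key _ _ ?_)) (key _ _ ?_)
  · exact div_nonneg (by linarith) (by linarith)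
  · exact div_nonneg (by linarith) (by linarith)
  · exact div_nonneg h4 (mul_nonneg (by linarith) (by linarith))

lemma sum_coup_row (hij : G.Adj i j) (u : V) :
    ∑ v, coup G i j u v = massDist G i u := by
  classical
  have hdi : 1 ≤ G.degree i := G.degree_pos_iff_exists_adj i |>.mpr ⟨j, hij⟩
  have hdj : 1 ≤ G.degree j := G.degree_pos_iff_exists_adj j |>.mpr ⟨i, hij.symm⟩
  have hdi' : (1:ℝ) ≤ (G.degree i : ℝ) := by exact_mod_cast hdi
  have hdj' : (1:ℝ) ≤ (G.degree j : ℝ) := by exact_mod_cast hdj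
  have hcardT : (((G.neighborFinset j).erase i).card : ℝ) = (G.degree j : ℝ) - 1 := by
    rw [Finset.card_erase_of_mem (by simp [hij.symm]), G.card_neighborFinset_eq_degree]
    push_cast [Nat.cast_sub hdj]
    ring
  unfold coup
  rw [Finset.sum_add_distrib, Finset.sum_add_distrib, Finset.sum_add_distrib,
    sum_ite_and_right, sum_ite_and_right, sum_ite_and_right, sum_ite_and_right,
    hcardT]
  set a := 1 / (G.degree i : ℝ) with ha
  set b := 1 / (G.degree j : ℝ) with hb
  set c := max 0 (a + b - 1) with hc
  by_cases hu : u = j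
  · have hmem : u ∉ (G.neighborFinset i).erase j := by simp [hu]
    have hadj : G.Adj i u := hu ▸ hij
    simp only [hu, Finset.mem_singleton, if_pos rfl, hmem, if_neg (by simp [hu] : ¬ (j ∈ (G.neighborFinset i).erase j)), massDist, if_pos hij, Finset.card_singleton]
    rcases eq_or_lt_of_le hdj' with h1 | h1
    · have hb1 : b = 1 := by rw [hb, ← h1]; norm_num
      have hc1 : c = a := by
        rw [hc, hb1]
        simp only [add_sub_cancel_right]
        exact max_eq_right (by positivity)
      rw [← h1, hc1]; simp [ha, one_div]
    · have hne : (G.degree j : ℝ) - 1 ≠ 0 := by linarith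
      field_simp
      first
      | exact mul_inv_cancel₀ (show (G.degree i:ℝ) ≠ 0 by positivity)
      | (rw [ha, one_div]; simp only [if_true, Nat.cast_one, one_mul, add_zero, add_sub_cancel]; exact inv_mul_cancel₀ (show (G.degree i:ℝ) ≠ 0 by positivity))
  · by_cases hadj : G.Adj i u
    · have hmem : u ∈ (G.neighborFinset i).erase j := by simp [hu, hadj]
      have hdi2 : (2:ℝ) ≤ (G.degree i : ℝ) := by
        have hsub : ({u, j} : Finset V) ⊆ G.neighborFinset i := by
          intro x hx; simp at hx; rcases hx with rfl | rfl <;> simp [hadj, hij]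
        have := Finset.card_le_card hsub
        rw [Finset.card_pair hu, G.card_neighborFinset_eq_degree] at this
        exact_mod_cast this
      have hYne : (G.degree i : ℝ) - 1 ≠ 0 := by linarith
      simp only [Finset.mem_singleton, if_neg hu, hmem, if_pos, massDist, if_pos hadj,
        Finset.card_singleton, zero_add]
      rcases eq_or_lt_of_le hdj' with h1 | h1
      · have hb1 : b = 1 := by rw [hb, ← h1]; norm_num
        have hc1 : c = a := by
          rw [hc, hb1]
          simp only [add_sub_cancel_right]
          exact max_eq_right (by positivity)
        rw [← h1, hc1, hb1, ha]
        field_simp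
        ring
      · have hXne : (G.degree j : ℝ) - 1 ≠ 0 := by linarith
        rw [ha, hb]
        field_simp
        ring
    · have hmem : u ∉ (G.neighborFinset i).erase j := by simp [hadj]
      simp [hu, hmem, massDist, hadj]

lemma coup_symm (u v : V) : coup G i j u v = coup G j i v u := by
  unfold coup
  by_cases h1 : u ∈ ({j} : Finset V) <;>
  by_cases h2 : v ∈ ({i} : Finset V) <;>
  by_cases h3 : u ∈ (G.neighborFinset i).erase j <;>
  by_cases h4 : v ∈ (G.neighborFinset j).erase i <;>
  simp [h1, h2, h3, h4] <;> ring_nf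

lemma coup_cost (htree : G.IsTree) (hij : G.Adj i j) :
    ∑ u, ∑ v, coup G i j u v * (G.dist u v : ℝ)
      = 1 + 2 * max (1 - 1 / (G.degree i : ℝ) - 1 / (G.degree j : ℝ)) 0 := by
  have hdi : 1 ≤ G.degree i := G.degree_pos_iff_exists_adj i |>.mpr ⟨j, hij⟩
  have hdj : 1 ≤ G.degree j := G.degree_pos_iff_exists_adj j |>.mpr ⟨i, hij.symm⟩
  have hdi' : (1:ℝ) ≤ (G.degree i : ℝ) := by exact_mod_cast hdi
  have hdj' : (1:ℝ) ≤ (G.degree j : ℝ) := by exact_mod_cast hdj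
  have hcardT : (((G.neighborFinset j).erase i).card : ℝ) = (G.degree j : ℝ) - 1 := by
    rw [Finset.card_erase_of_mem (by simp [hij.symm]), G.card_neighborFinset_eq_degree]
    push_cast [Nat.cast_sub hdj]
    ring
  have hcardS : (((G.neighborFinset i).erase j).card : ℝ) = (G.degree i : ℝ) - 1 := by
    rw [Finset.card_erase_of_mem (by simp [hij]), G.card_neighborFinset_eq_degree]
    push_cast [Nat.cast_sub hdi]
    ring
  unfold coup
  simp_rw [add_mul, Finset.sum_add_distrib]
  rw [sum_sum_ite, sum_sum_ite, sum_sum_ite, sum_sum_ite]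
  set a := 1 / (G.degree i : ℝ) with ha
  set b := 1 / (G.degree j : ℝ) with hb
  set c := max 0 (a + b - 1) with hc
  have ha0 : 0 ≤ a := by positivity
  have hb0 : 0 ≤ b := by positivity
  have hA1 : ∑ u ∈ ({j} : Finset V), ∑ v ∈ ({i} : Finset V), c * (G.dist u v : ℝ) = c := by
    rw [Finset.sum_singleton, Finset.sum_singleton,
      show G.dist j i = 1 from dist_eq_one_iff_adj.mpr hij.symm]
    norm_num
  have hA2 : ∑ u ∈ ({j} : Finset V), ∑ v ∈ (G.neighborFinset j).erase i,
      (a - c) / ((G.degree j : ℝ) - 1) * (G.dist u v : ℝ) = a - c := by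
    rw [Finset.sum_singleton]
    rw [Finset.sum_congr rfl (fun v hv => by
      rw [show G.dist j v = 1 from dist_eq_one_iff_adj.mpr (by
        simp only [Finset.mem_erase, mem_neighborFinset] at hv; exact hv.2)])]
    rw [Finset.sum_const, nsmul_eq_mul, hcardT]
    push_cast
    rcases eq_or_lt_of_le hdj' with h1 | h1
    · have hb1 : b = 1 := by rw [hb, ← h1]; norm_num
      have hc1 : c = a := by
        rw [hc, hb1]; simp only [add_sub_cancel_right]; exact max_eq_right ha0
      rw [← h1, hc1]; ring
    · have hne : (G.degree j : ℝ) - 1 ≠ 0 := by linarith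
      field_simp
  have hA3 : ∑ u ∈ (G.neighborFinset i).erase j, ∑ v ∈ ({i} : Finset V),
      (b - c) / ((G.degree i : ℝ) - 1) * (G.dist u v : ℝ) = b - c := by
    rw [Finset.sum_congr rfl (fun u hu => by
      rw [Finset.sum_singleton, show G.dist u i = 1 from dist_eq_one_iff_adj.mpr (by
        simp only [Finset.mem_erase, mem_neighborFinset] at hu; exact hu.2.symm)])]
    rw [Finset.sum_const, nsmul_eq_mul, hcardS]
    push_cast
    rcases eq_or_lt_of_le hdi' with h1 | h1
    · have ha1 : a = 1 := by rw [ha, ← h1]; norm_num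
      have hc1 : c = b := by
        rw [hc, ha1]
        rw [show (1:ℝ) + b - 1 = b by ring]
        exact max_eq_right hb0
      rw [← h1, hc1]; ring
    · have hne : (G.degree i : ℝ) - 1 ≠ 0 := by linarith
      field_simp
  have hA4 : ∑ u ∈ (G.neighborFinset i).erase j, ∑ v ∈ (G.neighborFinset j).erase i,
      (1 - a - b + c) / (((G.degree i : ℝ) - 1) * ((G.degree j : ℝ) - 1)) * (G.dist u v : ℝ)
      = 3 * (1 - a - b + c) := by
    rw [Finset.sum_congr rfl (fun u hu => Finset.sum_congr rfl (fun v hv => by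
      simp only [Finset.mem_erase, mem_neighborFinset] at hu hv
      rw [show G.dist u v = 3 from dist_eq_three htree hij hu.2 hv.2 hu.1 hv.1]))]
    rw [Finset.sum_const, Finset.sum_const, nsmul_eq_mul, nsmul_eq_mul, hcardS, hcardT]
    push_cast
    rcases eq_or_lt_of_le hdi' with h1 | h1
    · have ha1 : a = 1 := by rw [ha, ← h1]; norm_num
      have hc1 : c = b := by
        rw [hc, ha1, show (1:ℝ) + b - 1 = b by ring]
        exact max_eq_right hb0
      rw [← h1, hc1, ha1]; ring
    · rcases eq_or_lt_of_le hdj' with h2 | h2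
      · have hb1 : b = 1 := by rw [hb, ← h2]; norm_num
        have hc1 : c = a := by
          rw [hc, hb1]; simp only [add_sub_cancel_right]; exact max_eq_right ha0
        rw [← h2, hc1, hb1]; ring
      · have hne1 : (G.degree i : ℝ) - 1 ≠ 0 := by linarith
        have hne2 : (G.degree j : ℝ) - 1 ≠ 0 := by linarith
        field_simp
  rw [hA1, hA2, hA3, hA4]
  have hmaxid : max (1 - a - b) 0 = 1 - a - b + c := by
    rcases le_total (a + b) 1 with h | h
    · rw [max_eq_left (by linarith), hc, max_eq_left (by linarith)]; ring
    · rw [max_eq_right (by linarith), hc, max_eq_right (by linarith)]; ring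
  rw [hmaxid]; ring

lemma massDist_sum (hij : G.Adj i j) : ∑ u, massDist G i u = 1 := by
  have hdi : 0 < G.degree i := G.degree_pos_iff_exists_adj i |>.mpr ⟨j, hij⟩
  unfold massDist
  rw [Finset.sum_ite, Finset.sum_const_zero, Finset.sum_const, add_zero, nsmul_eq_mul]
  rw [← neighborFinset_eq_filter, G.card_neighborFinset_eq_degree]
  have : (G.degree i : ℝ) ≠ 0 := by positivity
  field_simp

lemma cost_lower (htree : G.IsTree) (hij : G.Adj i j) {Γ : V → V → ℝ}
    (hpos : ∀ u v, 0 ≤ Γ u v) (hrow : ∀ u, ∑ v, Γ u v = massDist G i u)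
    (hcol : ∀ v, ∑ u, Γ u v = massDist G j v) :
    1 + 2 * max (1 - 1 / (G.degree i : ℝ) - 1 / (G.degree j : ℝ)) 0
      ≤ ∑ u, ∑ v, Γ u v * (G.dist u v : ℝ) := by
  set a := 1 / (G.degree i : ℝ) with ha
  set b := 1 / (G.degree j : ℝ) with hb
  have htot : ∑ u, ∑ v, Γ u v = 1 := by
    rw [Finset.sum_congr rfl fun u _ => hrow u, massDist_sum hij]
  have hz : ∀ u v, ¬(G.Adj i u ∧ G.Adj j v) → Γ u v = 0 := by
    intro u v h
    rcases not_and_or.mp h with h | h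
    · have h1 : ∑ v', Γ u v' = 0 := by rw [hrow u]; simp [massDist, h]
      have h2 := Finset.single_le_sum (f := Γ u) (fun x _ => hpos u x) (Finset.mem_univ v)
      have := hpos u v
      linarith
    · have h1 : ∑ u', Γ u' v = 0 := by rw [hcol v]; simp [massDist, h]
      have h2 := Finset.single_le_sum (f := fun x => Γ x v) (fun x _ => hpos x v)
        (Finset.mem_univ u)
      have := hpos u v
      linarith
  have hrowj : ∑ v, Γ j v = a := by
    rw [hrow j]; simp [massDist, hij]; rw [ha, one_div]
  have hcoli : ∑ u, Γ u i = b := by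
    rw [hcol i]; simp [massDist, hij.symm]; rw [hb, one_div]
  have hadj_of_pos : ∀ u v, 0 < Γ u v → G.Adj i u ∧ G.Adj j v := by
    intro u v h
    by_contra hn
    rw [hz u v hn] at h
    exact lt_irrefl _ h
  have hdist1 : ∀ u v, 0 < Γ u v → (1:ℝ) ≤ (G.dist u v : ℝ) := by
    intro u v h
    obtain ⟨h1, h2⟩ := hadj_of_pos u v h
    have hne : u ≠ v := by rintro rfl; exact no_common_neighbor htree hij h1 h2
    exact_mod_cast htree.isConnected.pos_dist_of_ne hne
  have B1 : (1:ℝ) ≤ ∑ u, ∑ v, Γ u v * (G.dist u v : ℝ) := by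
    rw [← htot]
    refine Finset.sum_le_sum fun u _ => Finset.sum_le_sum fun v _ => ?_
    rcases eq_or_lt_of_le (hpos u v) with h | h
    · rw [← h]; simp
    · nlinarith [hdist1 u v h]
  have B2 : 3 - 2*a - 2*b ≤ ∑ u, ∑ v, Γ u v * (G.dist u v : ℝ) := by
    have hpt : ∀ u v, Γ u v * (if u = j ∨ v = i then (1:ℝ) else 3)
        ≤ Γ u v * (G.dist u v : ℝ) := by
      intro u v
      rcases eq_or_lt_of_le (hpos u v) with h | h
      · rw [← h]; simp
      · obtain ⟨h1, h2⟩ := hadj_of_pos u v h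
        split_ifs with hcase
        · nlinarith [hdist1 u v h]
        · push_neg at hcase
          rw [dist_eq_three htree hij h1 h2 hcase.1 hcase.2]
          norm_num
    have hid : ∀ u v, Γ u v * (if u = j ∨ v = i then (1:ℝ) else 3)
        = 3 * Γ u v - 2*((if u = j then Γ u v else 0) + (if v = i then Γ u v else 0)
          - (if u = j ∧ v = i then Γ u v else 0)) := by
      intro u v
      by_cases h1 : u = j <;> by_cases h2 : v = i <;> simp [h1, h2] <;> ring
    have hs1 : ∑ u, ∑ v, (if u = j then Γ u v else 0) = a := by
      have h : ∀ u, ∑ v, (if u = j then Γ u v else 0) = if u = j then ∑ v, Γ u v else 0 :=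
        fun u => by split_ifs <;> simp
      rw [Finset.sum_congr rfl fun u _ => h u, Finset.sum_ite_eq' Finset.univ j
        (fun u => ∑ v, Γ u v)]
      simp [hrowj]
    have hs2 : ∑ u, ∑ v, (if v = i then Γ u v else 0) = b := by
      have h : ∀ u, ∑ v, (if v = i then Γ u v else 0) = Γ u i := fun u => by
        rw [Finset.sum_ite_eq' Finset.univ i (Γ u)]; simp
      rw [Finset.sum_congr rfl fun u _ => h u, hcoli]
    have hs3 : ∑ u, ∑ v, (if u = j ∧ v = i then Γ u v else 0) = Γ j i := by
      have h : ∀ u, ∑ v, (if u = j ∧ v = i then Γ u v else 0)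
          = if u = j then Γ u i else 0 := by
        intro u
        by_cases hu : u = j
        · simp only [hu, true_and, if_pos rfl]
          rw [Finset.sum_ite_eq' Finset.univ i (Γ j)]; simp
        · simp [hu]
      rw [Finset.sum_congr rfl fun u _ => h u, Finset.sum_ite_eq' Finset.univ j
        (fun u => Γ u i)]
      simp
    have hsum : ∑ u, ∑ v, Γ u v * (if u = j ∨ v = i then (1:ℝ) else 3)
        = 3 - 2*(a + b - Γ j i) := by
      rw [Finset.sum_congr rfl fun u _ => Finset.sum_congr rfl fun v _ => hid u v]
      simp only [Finset.sum_sub_distrib, Finset.sum_add_distrib, ← Finset.mul_sum]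
      rw [htot, hs1, hs2, hs3]
      ring
    have := Finset.sum_le_sum fun u (_ : u ∈ Finset.univ) =>
      Finset.sum_le_sum fun v (_ : v ∈ Finset.univ) => hpt u v
    rw [hsum] at this
    have := hpos j i
    linarith
  rcases le_total (1 - a - b) 0 with h | h
  · rw [max_eq_right h]; linarith
  · rw [max_eq_left h]; linarith


end Helpers

/-- On a finite tree, the Jost–Liu lower bound on the Ollivier–Ricci curvature
is attained with equality on every edge. -/
theorem ollivierRicci_eq_jost_liu_bound_of_tree
    {V : Type*} [Fintype V] [DecidableEq V] (G : SimpleGraph V) [DecidableRel G.Adj]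
    (htree : G.IsTree) (hcard : 2 ≤ Fintype.card V)
    (i j : V) (hij : G.Adj i j) :
    ollivierRicci G i j =
      -2 * max (1 - 1 / (G.degree i : ℝ) - 1 / (G.degree j : ℝ)) 0 := by
  classical
  have hC : IsCoupling G i j (coup G i j) :=
    ⟨coup_nonneg hij, sum_coup_row hij,
      fun v => (Finset.sum_congr rfl fun u _ => coup_symm u v).trans (sum_coup_row hij.symm v)⟩
  have hmem : (1 + 2 * max (1 - 1 / (G.degree i : ℝ) - 1 / (G.degree j : ℝ)) 0) ∈
      { c : ℝ | ∃ Γ : V → V → ℝ, IsCoupling G i j Γ ∧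
        c = ∑ u, ∑ v, Γ u v * (G.dist u v : ℝ) } :=
    ⟨coup G i j, hC, (coup_cost htree hij).symm⟩
  have hlb : ∀ x ∈ { c : ℝ | ∃ Γ : V → V → ℝ, IsCoupling G i j Γ ∧
        c = ∑ u, ∑ v, Γ u v * (G.dist u v : ℝ) },
      (1 + 2 * max (1 - 1 / (G.degree i : ℝ) - 1 / (G.degree j : ℝ)) 0) ≤ x := by
    rintro x ⟨Γ, ⟨hpos, hrow, hcol⟩, rfl⟩
    exact cost_lower htree hij hpos hrow hcol
  have hW : wassersteinW1 G i j
      = 1 + 2 * max (1 - 1 / (G.degree i : ℝ) - 1 / (G.degree j : ℝ)) 0 := by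
    unfold wassersteinW1
    exact le_antisymm (csInf_le ⟨_, hlb⟩ hmem) (le_csInf ⟨_, hmem⟩ hlb)
  unfold ollivierRicci
  rw [hW]; ring
end

section
/- Let G be a finite connected simple graph on n ≥ 2 vertices, with normalized Laplacian L = I − D^{−1/2} A D^{−1/2}, where A is the adjacency matrix and D the diagonal matrix of vertex degrees. If there is a real number k such that the Ollivier–Ricci curvature satisfies κ(i,j) ≥ k for every edge {i,j} of G, then every nonzero eigenvalue λ of L satisfies k ≤ λ ≤ 2 − k; in particular, the largest eigenvalue of L is at most 2 − k and the smallest nonzero eigenvalue of L is at least k. -/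
open Finset Matrix

/-- The normalized Laplacian `L = I - D^{-1/2} A D^{-1/2}` of a graph. -/
noncomputable def normalizedLaplacian {V : Type*} [Fintype V] [DecidableEq V]
    (G : SimpleGraph V) [DecidableRel G.Adj] : Matrix V V ℝ :=
  1 - Matrix.diagonal (fun v => 1 / Real.sqrt (G.degree v)) * G.adjMatrix ℝ *
      Matrix.diagonal (fun v => 1 / Real.sqrt (G.degree v))

/-- Along any walk, the variation of `g` is bounded by `M` times the length,
provided each edge-step is bounded by `M`. -/
lemma abs_sub_le_mul_walk_length {V : Type*} (G : SimpleGraph V) (g : V → ℝ) (M : ℝ)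
    (hM : ∀ a b : V, G.Adj a b → |g a - g b| ≤ M) :
    ∀ {u v : V} (p : G.Walk u v), |g u - g v| ≤ M * p.length := by
  intro u v p
  induction p with
  | nil => simp
  | @cons a b c h q ih =>
    have h1 : |g a - g c| ≤ |g a - g b| + |g b - g c| := abs_sub_le _ _ _
    have h2 := hM a b h
    have h3 : ((SimpleGraph.Walk.cons h q).length : ℝ) = q.length + 1 := by
      simp [SimpleGraph.Walk.length_cons]
    rw [h3]
    nlinarith [ih]

/-- If every edge has Ollivier–Ricci curvature at least `k`, then every nonzero
eigenvalue `lam` of the normalized Laplacian satisfies `k ≤ lam ≤ 2 - k`. -/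
theorem nonzero_eigenvalue_bounds_of_curvature_lower_bound
    {V : Type*} [Fintype V] [DecidableEq V] (G : SimpleGraph V) [DecidableRel G.Adj]
    (hconn : G.Connected) (hcard : 2 ≤ Fintype.card V)
    (k : ℝ) (hk : ∀ i j : V, G.Adj i j → k ≤ ollivierRicci G i j)
    (lam : ℝ) (hlam : lam ≠ 0)
    (heig : ∃ x : V → ℝ, x ≠ 0 ∧ (normalizedLaplacian G) *ᵥ x = lam • x) :
    k ≤ lam ∧ lam ≤ 2 - k := by
  classical
  obtain ⟨x, hx0, hxe⟩ := heig
  have hnt : Nontrivial V := Fintype.one_lt_card_iff_nontrivial.mp hcard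
  -- degrees are positive
  have hdeg : ∀ v : V, 0 < G.degree v := by
    intro v
    rw [SimpleGraph.degree_pos_iff_exists_adj]
    obtain ⟨w, hw⟩ := exists_ne v
    obtain ⟨p⟩ := hconn.preconnected v w
    cases p with
    | nil => exact absurd rfl hw.symm
    | cons h _ => exact ⟨_, h⟩
  set s : V → ℝ := fun v => Real.sqrt (G.degree v) with hs_def
  have hspos : ∀ v, 0 < s v := fun v => Real.sqrt_pos.mpr (by exact_mod_cast hdeg v)
  have hss : ∀ v, s v * s v = (G.degree v : ℝ) := fun v => Real.mul_self_sqrt (by positivity)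
  set g : V → ℝ := fun v => x v / s v with hg_def
  -- the key eigenfunction identity: P g = (1 - lam) g
  have key : ∀ v, ∑ u, massDist G v u * g u = (1 - lam) * g v := by
    intro v
    have h := congrFun hxe v
    rw [Matrix.mulVec, dotProduct] at h
    have hrw : ∀ u, normalizedLaplacian G v u * x u
        = (if v = u then x u else 0) - (1 / s v) * ((if G.Adj v u then x u / s u else 0)) := by
      intro u
      simp only [normalizedLaplacian, Matrix.sub_apply, Matrix.one_apply,
        Matrix.mul_diagonal, Matrix.diagonal_mul, SimpleGraph.adjMatrix_apply, hs_def]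
      split_ifs <;> ring
    rw [Finset.sum_congr rfl (fun u _ => hrw u), Finset.sum_sub_distrib,
      Finset.sum_ite_eq, ← Finset.mul_sum] at h
    simp only [Finset.mem_univ, if_true, Pi.smul_apply, smul_eq_mul] at h
    set T := ∑ u, (if G.Adj v u then x u / s u else 0) with hT
    have hsv := (hspos v).ne'
    have hTval : T = s v * ((1 - lam) * x v) := by
      have : (1 / s v) * T = (1 - lam) * x v := by linarith
      field_simp at this
      linarith
    have hstep : ∑ u, massDist G v u * g u = (1 / (G.degree v : ℝ)) * T := by
      rw [hT, Finset.mul_sum]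
      apply Finset.sum_congr rfl
      intro u _
      simp only [massDist, hg_def]
      split_ifs <;> ring
    rw [hstep, hTval, hg_def, ← hss v]
    field_simp
  -- total mass is 1
  have hmass : ∀ i : V, ∑ u, massDist G i u = 1 := by
    intro i
    have h1 : ∑ u, massDist G i u = ∑ u ∈ G.neighborFinset i, (1 / (G.degree i : ℝ)) := by
      simp only [massDist]
      rw [← Finset.sum_filter]
      apply Finset.sum_congr
      · ext u; simp [SimpleGraph.mem_neighborFinset]
      · intros; rfl
    rw [h1, Finset.sum_const, SimpleGraph.card_neighborFinset_eq_degree, nsmul_eq_mul]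
    have := (hdeg i).ne'
    field_simp
  have hmnonneg : ∀ i u : V, 0 ≤ massDist G i u := by
    intro i u
    simp only [massDist]
    split_ifs
    · positivity
    · exact le_refl 0
  -- existence of the product coupling: the Wasserstein set is nonempty
  have hcoup : ∀ i j : V,
      { c : ℝ | ∃ Γ : V → V → ℝ, IsCoupling G i j Γ ∧
        c = ∑ u, ∑ v, Γ u v * (G.dist u v : ℝ) }.Nonempty := by
    intro i j
    refine ⟨_, fun u v => massDist G i u * massDist G j v, ⟨?_, ?_, ?_⟩, rfl⟩
    · intro u v; exact mul_nonneg (hmnonneg i u) (hmnonneg j v)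
    · intro u; rw [← Finset.mul_sum, hmass j, mul_one]
    · intro v; rw [← Finset.sum_mul, hmass i, one_mul]
  -- curvature bound gives Wasserstein bound
  have hW : ∀ i j : V, G.Adj i j → wassersteinW1 G i j ≤ 1 - k := by
    intro i j h
    have := hk i j h
    simp only [ollivierRicci] at this
    linarith
  -- the maximal edge increment M
  set es : Finset (V × V) := Finset.univ.filter (fun p : V × V => G.Adj p.1 p.2) with hes
  have hesne : es.Nonempty := by
    obtain ⟨v⟩ := hconn.nonempty
    obtain ⟨w, hw⟩ := (G.degree_pos_iff_exists_adj v).mp (hdeg v)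
    refine ⟨(v, w), ?_⟩
    rw [hes]
    simp only [Finset.mem_filter]
    exact ⟨Finset.mem_univ _, hw⟩
  set M : ℝ := es.sup' hesne (fun p => |g p.1 - g p.2|) with hM
  have hMadj : ∀ a b : V, G.Adj a b → |g a - g b| ≤ M :=
    fun a b h => Finset.le_sup' (f := fun p : V × V => |g p.1 - g p.2|)
      (b := (a, b)) (by rw [hes]; exact Finset.mem_filter.mpr ⟨Finset.mem_univ _, h⟩)
  have hM0 : 0 ≤ M := by
    obtain ⟨q, hq⟩ := hesne
    exact le_trans (abs_nonneg (g q.1 - g q.2))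
      (Finset.le_sup' (fun p : V × V => |g p.1 - g p.2|) hq)
  -- Lipschitz bound with respect to graph distance
  have hLip : ∀ u v : V, |g u - g v| ≤ M * (G.dist u v : ℝ) := by
    intro u v
    obtain ⟨p, hp⟩ := hconn.exists_walk_length_eq_dist u v
    have := abs_sub_le_mul_walk_length G g M hMadj p
    rwa [hp] at this
  -- M is positive
  have hMpos : 0 < M := by
    rcases lt_or_eq_of_le hM0 with h | h
    · exact h
    -- if M = 0 then g is constant, contradicting lam ≠ 0 and x ≠ 0
    exfalso
    have hgc : ∀ u v : V, g u = g v := by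
      intro u v
      obtain ⟨p, hp⟩ := hconn.exists_walk_length_eq_dist u v
      have h2 := abs_sub_le_mul_walk_length G g M hMadj p
      rw [← h] at h2
      have : |g u - g v| ≤ 0 := by simpa using h2
      have := abs_nonpos_iff.mp this
      linarith [sub_eq_zero.mp this]
      -- alternative
    have hg0 : ∀ v : V, g v = 0 := by
      intro v
      have h1 := key v
      have h2 : ∑ u, massDist G v u * g u = g v := by
        calc ∑ u, massDist G v u * g u = ∑ u, massDist G v u * g v := by
              exact Finset.sum_congr rfl (fun u _ => by rw [hgc u v])
          _ = (∑ u, massDist G v u) * g v := by rw [Finset.sum_mul]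
          _ = g v := by rw [hmass v, one_mul]
      rw [h2] at h1
      have : lam * g v = 0 := by linarith
      rcases mul_eq_zero.mp this with h3 | h3
      · exact absurd h3 hlam
      · exact h3
    apply hx0
    funext v
    have := hg0 v
    rw [hg_def] at this
    simp only at this
    have hsv := (hspos v).ne'
    have : x v = 0 := by
      field_simp at this
      simpa using this
    simpa using this
  -- Kantorovich easy direction
  have hKant : ∀ i j : V,
      |∑ u, massDist G i u * g u - ∑ u, massDist G j u * g u| ≤ M * wassersteinW1 G i j := by
    intro i j
    rw [← div_le_iff₀' hMpos]
    apply le_csInf (hcoup i j)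
    rintro c ⟨Γ, ⟨hpos, hmi, hmj⟩, rfl⟩
    rw [div_le_iff₀' hMpos]
    have hΔ : ∑ u, massDist G i u * g u - ∑ u, massDist G j u * g u
        = ∑ u, ∑ v, Γ u v * (g u - g v) := by
      have e1 : ∑ u, massDist G i u * g u = ∑ u, ∑ v, Γ u v * g u := by
        apply Finset.sum_congr rfl
        intro u _
        rw [← hmi u, Finset.sum_mul]
      have e2 : ∑ v, massDist G j v * g v = ∑ u, ∑ v, Γ u v * g v := by
        rw [Finset.sum_comm]
        apply Finset.sum_congr rfl
        intro v _
        rw [← hmj v, Finset.sum_mul]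
      rw [e1, e2, ← Finset.sum_sub_distrib]
      apply Finset.sum_congr rfl
      intro u _
      rw [← Finset.sum_sub_distrib]
      apply Finset.sum_congr rfl
      intro v _
      ring
    rw [hΔ]
    calc |∑ u, ∑ v, Γ u v * (g u - g v)|
        ≤ ∑ u, ∑ v, |Γ u v * (g u - g v)| := by
          refine le_trans (Finset.abs_sum_le_sum_abs _ _) ?_
          exact Finset.sum_le_sum (fun u _ => Finset.abs_sum_le_sum_abs _ _)
      _ ≤ ∑ u, ∑ v, Γ u v * (M * (G.dist u v : ℝ)) := by
          refine Finset.sum_le_sum (fun u _ => Finset.sum_le_sum (fun v _ => ?_))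
          rw [abs_mul, abs_of_nonneg (hpos u v)]
          exact mul_le_mul_of_nonneg_left (hLip u v) (hpos u v)
      _ = M * ∑ u, ∑ v, Γ u v * (G.dist u v : ℝ) := by
          rw [Finset.mul_sum]
          apply Finset.sum_congr rfl
          intro u _
          rw [Finset.mul_sum]
          apply Finset.sum_congr rfl
          intro v _
          ring
  -- choose the maximizing edge
  obtain ⟨p, hp, hpeq⟩ := Finset.exists_mem_eq_sup' hesne (fun p : V × V => |g p.1 - g p.2|)
  have hadj : G.Adj p.1 p.2 := by
    have := hp
    simp only [hes, Finset.mem_filter] at this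
    exact this.2
  have hfinal : |1 - lam| * M ≤ M * (1 - k) := by
    have h1 : |∑ u, massDist G p.1 u * g u - ∑ u, massDist G p.2 u * g u|
        = |1 - lam| * M := by
      rw [key p.1, key p.2, ← mul_sub, abs_mul, hM, hpeq]
    have h2 := hKant p.1 p.2
    rw [h1] at h2
    calc |1 - lam| * M ≤ M * wassersteinW1 G p.1 p.2 := h2
      _ ≤ M * (1 - k) := mul_le_mul_of_nonneg_left (hW p.1 p.2 hadj) hM0
  have habs : |1 - lam| ≤ 1 - k := by
    have := hfinal
    nlinarith [hMpos]
  rw [abs_le] at habs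
  constructor <;> linarith [habs.1, habs.2]
end

section
/- Let L̂ ∈ ℝ^{n×n} be symmetric with orthogonal eigendecomposition L̂ = Uᵀ diag(λ_1,…,λ_n) U (UᵀU = I) and all eigenvalues λ_i ∈ [0,2]. Let ρ = max_i λ_i, and assume ρ > 0 is a simple eigenvalue of L̂ with unit eigenvector u_ρ. Let W ∈ ℝ^{c×c} be symmetric and assume that max_k |λ_k^W| over the eigenvalues λ_k^W of W is attained only at a simple eigenvalue ω > 0 of W, with unit eigenvector φ. Fix θ > 1, set g(λ) = cos²(λ/8) + θ sin²(λ/8), and define the spectral framelet propagation matrix M = W ⊗ (Uᵀ diag(g(λ_1),…,g(λ_n)) U) ∈ ℝ^{cn×cn}. Then for every x₀ ∈ ℝ^{cn} with ⟨x₀, φ ⊗ u_ρ⟩ ≠ 0, the normalized iterates M^m x₀ / ‖M^m x₀‖ converge as m → ∞ to a unit vector h_∞ ∈ {±(φ ⊗ u_ρ)} satisfying (I_c ⊗ L̂) h_∞ = ρ h_∞; that is, the spectral Haar framelet convolution with high-pass coefficient θ > 1 is high-frequency-dominant. -/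
open Matrix Kronecker Filter

/-- The Euclidean norm of a vector indexed by a finite type. -/
noncomputable def euclNorm {ι : Type*} [Fintype ι] (x : ι → ℝ) : ℝ :=
  Real.sqrt (x ⬝ᵥ x)

/-- Kronecker (tensor) product of two vectors. -/
def vecKron {ι κ : Type*} (φ : ι → ℝ) (u : κ → ℝ) : ι × κ → ℝ :=
  fun p => φ p.1 * u p.2


section Aux

variable {ι : Type*} [Fintype ι] [DecidableEq ι]
set_option linter.unusedSectionVars false

lemma euclNorm_smul (a : ℝ) (x : ι → ℝ) : euclNorm (a • x) = |a| * euclNorm x := by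
  unfold euclNorm
  have h : (a • x) ⬝ᵥ (a • x) = a ^ 2 * (x ⬝ᵥ x) := by
    rw [smul_dotProduct, dotProduct_smul]; simp [sq, mul_assoc]
  rw [h, Real.sqrt_mul (sq_nonneg a), Real.sqrt_sq_eq_abs]

lemma euclNorm_single (j : ι) (t : ℝ) :
    euclNorm (Pi.single j t) = |t| := by
  unfold euclNorm
  rw [single_dotProduct, Pi.single_eq_same, Real.sqrt_mul_self_eq_abs]

lemma dot_self_of_euclNorm_one {x : ι → ℝ} (h : euclNorm x = 1) : x ⬝ᵥ x = 1 :=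
  Real.sqrt_eq_one.mp h

lemma ne_zero_of_euclNorm_one {x : ι → ℝ} (h : euclNorm x = 1) : x ≠ 0 := by
  intro h0
  rw [h0] at h
  simp [euclNorm] at h

lemma continuous_euclNorm : Continuous (euclNorm : (ι → ℝ) → ℝ) := by
  unfold euclNorm
  exact Real.continuous_sqrt.comp <| continuous_finset_sum _ fun i _ =>
    (continuous_apply i).mul (continuous_apply i)

lemma continuous_mulVec {κ : Type*} [Fintype κ] (Q : Matrix ι κ ℝ) :
    Continuous fun v : κ → ℝ => Q *ᵥ v := by
  refine continuous_pi fun i => continuous_finset_sum _ fun j _ => ?_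
  exact continuous_const.mul (continuous_apply j)

lemma orth_dot {Q : Matrix ι ι ℝ} (h : Qᵀ * Q = 1) (v w : ι → ℝ) :
    (Q *ᵥ v) ⬝ᵥ (Q *ᵥ w) = v ⬝ᵥ w := by
  rw [dotProduct_mulVec, ← mulVec_transpose, mulVec_mulVec, h, one_mulVec]

lemma euclNorm_mulVec {Q : Matrix ι ι ℝ} (h : Qᵀ * Q = 1) (v : ι → ℝ) :
    euclNorm (Q *ᵥ v) = euclNorm v := by
  unfold euclNorm; rw [orth_dot h]

lemma col_eig {A P : Matrix ι ι ℝ} {d : ι → ℝ}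
    (h : A * P = P * Matrix.diagonal d) (k : ι) :
    A *ᵥ (P *ᵥ Pi.single k 1) = d k • (P *ᵥ Pi.single k 1) := by
  have hs : Pi.single k (d k) = d k • (Pi.single k 1 : ι → ℝ) := by
    funext a; simp [Pi.single_apply, mul_ite]
  rw [mulVec_mulVec, h, ← mulVec_mulVec, diagonal_mulVec_single, mul_one, hs, mulVec_smul]

lemma myConjPow (Q : Matrix ι ι ℝ) (d : ι → ℝ)
    (h1 : Q * Qᵀ = 1) (m : ℕ) :
    (Q * Matrix.diagonal d * Qᵀ) ^ m = Q * Matrix.diagonal (fun j => d j ^ m) * Qᵀ := by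
  induction m with
  | zero => simp [pow_zero, h1]
  | succ m ih =>
      have h2 : Qᵀ * Q = 1 := mul_eq_one_comm.mp h1
      rw [pow_succ, ih]
      calc Q * Matrix.diagonal (fun j => d j ^ m) * Qᵀ * (Q * Matrix.diagonal d * Qᵀ)
          = Q * Matrix.diagonal (fun j => d j ^ m) * (Qᵀ * Q) * Matrix.diagonal d * Qᵀ := by
            simp only [Matrix.mul_assoc]
        _ = Q * (Matrix.diagonal (fun j => d j ^ m) * Matrix.diagonal d) * Qᵀ := by
            rw [h2, mul_one]; simp only [Matrix.mul_assoc]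
        _ = Q * Matrix.diagonal (fun j => d j ^ (m + 1)) * Qᵀ := by
            have hfun : (fun j => d j ^ m * d j) = (fun j => d j ^ (m + 1)) :=
              funext fun j => (pow_succ (d j) m).symm
            rw [diagonal_mul_diagonal, hfun]

lemma power_iter (d y : ι → ℝ) (j0 : ι)
    (hpos : 0 < d j0) (hdom : ∀ j, j ≠ j0 → |d j| < d j0) (hy : y j0 ≠ 0) :
    Tendsto (fun m : ℕ => (euclNorm (fun j => d j ^ m * y j))⁻¹ • (fun j => d j ^ m * y j))
      atTop (nhds ((euclNorm ((Pi.single j0 (y j0)) : ι → ℝ))⁻¹ • ((Pi.single j0 (y j0)) : ι → ℝ))) := by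
  classical
  have hd0 : d j0 ≠ 0 := ne_of_gt hpos
  set v : ℕ → ι → ℝ := fun m j => (d j / d j0) ^ m * y j with hv
  have heq : ∀ m : ℕ, (fun j => d j ^ m * y j) = (d j0 ^ m) • v m := by
    intro m; funext j
    simp only [hv, Pi.smul_apply, smul_eq_mul, div_pow]
    field_simp
  have hvlim : Tendsto v atTop (nhds ((Pi.single j0 (y j0)) : ι → ℝ)) := by
    rw [tendsto_pi_nhds]
    intro j
    by_cases hj : j = j0
    · subst hj
      simp only [hv, div_self hd0, one_pow, one_mul, Pi.single_eq_same]
      exact tendsto_const_nhds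
    · have h1 : |d j / d j0| < 1 := by
        rw [abs_div, abs_of_pos hpos, div_lt_one hpos]; exact hdom j hj
      have h2 := (tendsto_pow_atTop_nhds_zero_of_abs_lt_one h1).mul_const (y j)
      rw [zero_mul] at h2
      simpa [hv, Pi.single_eq_of_ne hj] using h2
  have hne : euclNorm (Pi.single j0 (y j0)) ≠ 0 := by
    rw [euclNorm_single]; exact abs_ne_zero.mpr hy
  have hNlim : Tendsto (fun m => euclNorm (v m)) atTop
      (nhds (euclNorm ((Pi.single j0 (y j0)) : ι → ℝ))) :=
    (continuous_euclNorm.tendsto _).comp hvlim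
  have hcore : Tendsto (fun m => (euclNorm (v m))⁻¹ • v m) atTop
      (nhds ((euclNorm ((Pi.single j0 (y j0)) : ι → ℝ))⁻¹ • ((Pi.single j0 (y j0)) : ι → ℝ))) :=
    (hNlim.inv₀ hne).smul hvlim
  refine hcore.congr fun m => ?_
  rw [heq m, euclNorm_smul, abs_of_pos (pow_pos hpos m), smul_smul, mul_inv,
    mul_comm ((d j0 ^ m)⁻¹), mul_assoc, inv_mul_cancel₀ (pow_ne_zero m hd0), mul_one]

end Aux

section Aux2

lemma vecKron_smul_left {ι κ : Type*} (a : ℝ) (u : ι → ℝ) (v : κ → ℝ) :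
    vecKron (a • u) v = a • vecKron u v := by
  funext p; simp [vecKron, mul_assoc]

lemma vecKron_smul_right {ι κ : Type*} (a : ℝ) (u : ι → ℝ) (v : κ → ℝ) :
    vecKron u (a • v) = a • vecKron u v := by
  funext p; simp [vecKron]; ring

lemma vecKron_dot {ι κ : Type*} [Fintype ι] [Fintype κ] (u u' : ι → ℝ) (v v' : κ → ℝ) :
    vecKron u v ⬝ᵥ vecKron u' v' = (u ⬝ᵥ u') * (v ⬝ᵥ v') := by
  show ∑ q : ι × κ, (u q.1 * v q.2) * (u' q.1 * v' q.2) = _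
  rw [dotProduct, dotProduct, Finset.sum_mul_sum, Fintype.sum_prod_type]
  exact Finset.sum_congr rfl fun i _ => Finset.sum_congr rfl fun j _ => by ring

lemma kron_mulVec {ι κ ι' κ' : Type*} [Fintype ι'] [Fintype κ']
    (A : Matrix ι ι' ℝ) (B : Matrix κ κ' ℝ) (u : ι' → ℝ) (v : κ' → ℝ) :
    (A ⊗ₖ B) *ᵥ vecKron u v = vecKron (A *ᵥ u) (B *ᵥ v) := by
  funext p
  show ∑ q : ι' × κ', (A p.1 q.1 * B p.2 q.2) * (u q.1 * v q.2)
      = (∑ i, A p.1 i * u i) * (∑ j, B p.2 j * v j)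
  rw [Finset.sum_mul_sum, Fintype.sum_prod_type]
  exact Finset.sum_congr rfl fun i _ => Finset.sum_congr rfl fun j _ => by ring

lemma single_eq_vecKron {ι κ : Type*} [DecidableEq ι] [DecidableEq κ] (a : ι) (b : κ) :
    (Pi.single (a, b) 1 : ι × κ → ℝ) = vecKron (Pi.single a 1) (Pi.single b 1) := by
  funext p
  rcases p with ⟨i, j⟩
  by_cases h1 : i = a <;> by_cases h2 : j = b <;>
    simp [vecKron, Pi.single_apply, Prod.ext_iff, h1, h2]

/-- For an orthogonal `P` with `A * P = P * diagonal dg`, if `dg k₀ = μ` and the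
`μ`-eigenspace of `A` is spanned by the unit vector `φ`, then column `k₀` of `P`
is `±φ`. -/
lemma col_pm {ι : Type*} [Fintype ι] [DecidableEq ι]
    {P : Matrix ι ι ℝ} (hP : Pᵀ * P = 1)
    {A : Matrix ι ι ℝ} {dg : ι → ℝ} (hAP : A * P = P * Matrix.diagonal dg)
    {μ : ℝ} {φ : ι → ℝ} (hφ : φ ⬝ᵥ φ = 1)
    (hsimple : ∀ v : ι → ℝ, A *ᵥ v = μ • v → ∃ t : ℝ, v = t • φ)
    {k₀ : ι} (h₀ : dg k₀ = μ) :
    ∃ ε : ℝ, (ε = 1 ∨ ε = -1) ∧ P *ᵥ Pi.single k₀ 1 = ε • φ := by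
  have heig := col_eig hAP k₀
  rw [h₀] at heig
  obtain ⟨t, ht⟩ := hsimple _ heig
  have hnorm : (P *ᵥ Pi.single k₀ 1) ⬝ᵥ (P *ᵥ Pi.single k₀ 1) = 1 := by
    rw [orth_dot hP, single_dotProduct, Pi.single_eq_same, mul_one]
  rw [ht, smul_dotProduct, dotProduct_smul, hφ] at hnorm
  have ht2 : t * t = 1 := by simpa using hnorm
  exact ⟨t, mul_self_eq_one_iff.mp ht2, ht⟩

lemma unique_col {ι : Type*} [Fintype ι] [DecidableEq ι]
    {P : Matrix ι ι ℝ} (hP : Pᵀ * P = 1)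
    {A : Matrix ι ι ℝ} {dg : ι → ℝ} (hAP : A * P = P * Matrix.diagonal dg)
    {μ : ℝ} {φ : ι → ℝ} (hφ : φ ⬝ᵥ φ = 1)
    (hsimple : ∀ v : ι → ℝ, A *ᵥ v = μ • v → ∃ t : ℝ, v = t • φ)
    {k₀ k₁ : ι} (h₀ : dg k₀ = μ) (h₁ : dg k₁ = μ) : k₀ = k₁ := by
  by_contra hne
  obtain ⟨t₀, ht₀pm, ht₀⟩ := col_pm hP hAP hφ hsimple h₀
  obtain ⟨t₁, ht₁pm, ht₁⟩ := col_pm hP hAP hφ hsimple h₁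
  have horth : (P *ᵥ Pi.single k₀ 1) ⬝ᵥ (P *ᵥ Pi.single k₁ 1) = 0 := by
    rw [orth_dot hP, single_dotProduct, Pi.single_eq_of_ne hne, mul_zero]
  rw [ht₀, ht₁, smul_dotProduct, dotProduct_smul, hφ] at horth
  have h0 : t₀ * t₁ ≠ 0 := by
    rcases ht₀pm with h | h <;> rcases ht₁pm with h' | h' <;> rw [h, h'] <;> norm_num
  exact h0 (by simpa using horth)

lemma gfun_pos {θ x : ℝ} (hθ : 1 < θ) :
    0 < Real.cos (x / 8) ^ 2 + θ * Real.sin (x / 8) ^ 2 := by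
  rw [Real.cos_sq']
  nlinarith [sq_nonneg (Real.sin (x / 8)), Real.sin_sq_le_one (x / 8)]

lemma gfun_lt {θ : ℝ} (hθ : 1 < θ) {a b : ℝ} (ha : 0 ≤ a) (hab : a < b) (hb : b ≤ 2) :
    Real.cos (a / 8) ^ 2 + θ * Real.sin (a / 8) ^ 2
      < Real.cos (b / 8) ^ 2 + θ * Real.sin (b / 8) ^ 2 := by
  have hpi := Real.pi_gt_three
  have hsa : 0 ≤ Real.sin (a / 8) :=
    Real.sin_nonneg_of_nonneg_of_le_pi (by linarith) (by linarith)
  have hlt : Real.sin (a / 8) < Real.sin (b / 8) := by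
    apply Real.strictMonoOn_sin ⟨by linarith, by linarith⟩ ⟨by linarith, by linarith⟩
    linarith
  have hsq : Real.sin (a / 8) ^ 2 < Real.sin (b / 8) ^ 2 := by nlinarith
  rw [Real.cos_sq', Real.cos_sq']
  nlinarith

end Aux2

set_option maxHeartbeats 1000000 in
/-- The spectral Haar framelet convolution with high-pass coefficient `θ > 1` is
high-frequency-dominant: the normalized iterates converge to `±(φ ⊗ u_ρ)`, an
eigenvector of `I_c ⊗ L̂` for its largest eigenvalue `ρ`. -/
theorem spectral_haar_framelet_HFD
    {n c : ℕ} (Lhat : Matrix (Fin n) (Fin n) ℝ)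
    (U : Matrix (Fin n) (Fin n) ℝ) (lam : Fin n → ℝ)
    (hU : Uᵀ * U = 1) (hL : Lhat = Uᵀ * Matrix.diagonal lam * U)
    (hlam : ∀ i, lam i ∈ Set.Icc (0 : ℝ) 2)
    (ρ : ℝ) (hρmax : ∀ i, lam i ≤ ρ) (hρmem : ∃ i, lam i = ρ) (hρpos : 0 < ρ)
    (uρ : Fin n → ℝ) (huρeig : Lhat *ᵥ uρ = ρ • uρ) (huρunit : euclNorm uρ = 1)
    (hρsimple : ∀ v : Fin n → ℝ, Lhat *ᵥ v = ρ • v → ∃ t : ℝ, v = t • uρ)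
    (W : Matrix (Fin c) (Fin c) ℝ) (hW : W.IsSymm)
    (ω : ℝ) (hωpos : 0 < ω)
    (φ : Fin c → ℝ) (hφeig : W *ᵥ φ = ω • φ) (hφunit : euclNorm φ = 1)
    (hωsimple : ∀ v : Fin c → ℝ, W *ᵥ v = ω • v → ∃ t : ℝ, v = t • φ)
    (hωdom : ∀ ν : ℝ, (∃ v : Fin c → ℝ, v ≠ 0 ∧ W *ᵥ v = ν • v) → ν ≠ ω → |ν| < ω)
    (θ : ℝ) (hθ : 1 < θ)
    (M : Matrix (Fin c × Fin n) (Fin c × Fin n) ℝ)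
    (hM : M = W ⊗ₖ
      (Uᵀ * Matrix.diagonal (fun i =>
        Real.cos (lam i / 8) ^ 2 + θ * Real.sin (lam i / 8) ^ 2) * U))
    (x₀ : Fin c × Fin n → ℝ) (hx₀ : x₀ ⬝ᵥ vecKron φ uρ ≠ 0) :
    ∃ hinf : Fin c × Fin n → ℝ,
      (hinf = vecKron φ uρ ∨ hinf = -vecKron φ uρ) ∧
      ((1 : Matrix (Fin c) (Fin c) ℝ) ⊗ₖ Lhat) *ᵥ hinf = ρ • hinf ∧
      Tendsto (fun m : ℕ => (euclNorm ((M ^ m) *ᵥ x₀))⁻¹ • ((M ^ m) *ᵥ x₀))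
        atTop (nhds hinf) := by
  classical
  have hφdot : φ ⬝ᵥ φ = 1 := dot_self_of_euclNorm_one hφunit
  have huρdot : uρ ⬝ᵥ uρ = 1 := dot_self_of_euclNorm_one huρunit
  have hφne : φ ≠ 0 := ne_zero_of_euclNorm_one hφunit
  -- spectral theorem for W
  have hWh : W.IsHermitian := by
    rw [Matrix.IsHermitian, Matrix.conjTranspose_eq_transpose_of_trivial]; exact hW
  set V : Matrix (Fin c) (Fin c) ℝ :=
    (hWh.eigenvectorUnitary : Matrix (Fin c) (Fin c) ℝ) with hVdef
  set ν : Fin c → ℝ := hWh.eigenvalues with hνdef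
  have hspec : W = V * Matrix.diagonal ν * Vᵀ := by
    have h := hWh.spectral_theorem
    rw [Unitary.conjStarAlgAut_apply, Matrix.star_eq_conjTranspose, Matrix.conjTranspose_eq_transpose_of_trivial,
      RCLike.ofReal_real_eq_id, Function.id_comp] at h
    exact h
  have hVV : V * star V = 1 := by
    rw [hVdef]; exact Matrix.mem_unitaryGroup_iff.mp hWh.eigenvectorUnitary.2
  have hVVt : V * Vᵀ = 1 := by
    rw [Matrix.star_eq_conjTranspose, Matrix.conjTranspose_eq_transpose_of_trivial] at hVV
    exact hVV
  have hVtV : Vᵀ * V = 1 := mul_eq_one_comm.mp hVVt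
  have hWV : W * V = V * Matrix.diagonal ν := by
    rw [hspec, Matrix.mul_assoc (V * Matrix.diagonal ν) Vᵀ V, hVtV, mul_one]
  -- find the index of ω among the eigenvalues of W
  have hVtW : Vᵀ * W = Matrix.diagonal ν * Vᵀ := by
    rw [hspec, ← Matrix.mul_assoc, ← Matrix.mul_assoc, hVtV, one_mul]
  set z : Fin c → ℝ := Vᵀ *ᵥ φ with hz
  have hzrel : ∀ k, ν k * z k = ω * z k := by
    intro k
    have h1 : Vᵀ *ᵥ (W *ᵥ φ) = Matrix.diagonal ν *ᵥ z := by
      rw [hz, Matrix.mulVec_mulVec, hVtW, ← Matrix.mulVec_mulVec]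
    rw [hφeig, Matrix.mulVec_smul] at h1
    have h2 := congrFun h1 k
    rw [Matrix.mulVec_diagonal] at h2
    simp only [Pi.smul_apply, smul_eq_mul] at h2
    exact h2.symm
  have hzne : z ≠ 0 := by
    intro h0
    apply hφne
    have h1 : V *ᵥ z = φ := by rw [hz, Matrix.mulVec_mulVec, hVVt, Matrix.one_mulVec]
    rw [h0, Matrix.mulVec_zero] at h1; exact h1.symm
  obtain ⟨k₀, hk₀⟩ := Function.ne_iff.mp hzne
  have hνk₀ : ν k₀ = ω := mul_right_cancel₀ hk₀ (hzrel k₀)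
  -- the Lhat side
  have hUUt : U * Uᵀ = 1 := mul_eq_one_comm.mp hU
  have hUtU' : (Uᵀ)ᵀ * Uᵀ = 1 := by rw [Matrix.transpose_transpose]; exact hUUt
  have hLU : Lhat * Uᵀ = Uᵀ * Matrix.diagonal lam := by
    rw [hL, Matrix.mul_assoc (Uᵀ * Matrix.diagonal lam) U Uᵀ, hUUt, mul_one]
  obtain ⟨i₀, hi₀⟩ := hρmem
  have hkuniq : ∀ k, ν k = ω → k = k₀ := fun k hk =>
    unique_col hVtV hWV hφdot hωsimple hk hνk₀
  have hiuniq : ∀ i, lam i = ρ → i = i₀ := fun i hi =>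
    unique_col hUtU' hLU huρdot hρsimple hi hi₀
  obtain ⟨ε₁, hε₁pm, hε₁⟩ := col_pm hVtV hWV hφdot hωsimple hνk₀
  obtain ⟨ε₂, hε₂pm, hε₂⟩ := col_pm hUtU' hLU huρdot hρsimple hi₀
  -- dominance of ω among the |ν k|
  have hνdom : ∀ k, k ≠ k₀ → |ν k| < ω := by
    intro k hk
    have hcol : W *ᵥ (V *ᵥ Pi.single k 1) = ν k • (V *ᵥ Pi.single k 1) := col_eig hWV k
    have hcne : (V *ᵥ Pi.single k 1) ≠ 0 := by
      intro h0
      have h1 : (V *ᵥ Pi.single k 1) ⬝ᵥ (V *ᵥ Pi.single k 1) = 1 := by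
        rw [orth_dot hVtV, single_dotProduct, Pi.single_eq_same, mul_one]
      rw [h0] at h1; simp at h1
    exact hωdom (ν k) ⟨_, hcne, hcol⟩ fun h => hk (hkuniq k h)
  -- the filter function g
  set g : ℝ → ℝ := fun x => Real.cos (x / 8) ^ 2 + θ * Real.sin (x / 8) ^ 2 with hg
  have hρle2 : ρ ≤ 2 := hi₀ ▸ (hlam i₀).2
  have hgpos : ∀ x : ℝ, 0 < g x := fun x => gfun_pos hθ
  have hgle : ∀ i, g (lam i) ≤ g ρ := by
    intro i
    rcases eq_or_lt_of_le (hρmax i) with h | h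
    · rw [h]
    · exact le_of_lt (gfun_lt hθ (hlam i).1 h hρle2)
  have hglt : ∀ i, i ≠ i₀ → g (lam i) < g ρ := by
    intro i hi
    have hne : lam i ≠ ρ := fun h => hi (hiuniq i h)
    exact gfun_lt hθ (hlam i).1 (lt_of_le_of_ne (hρmax i) hne) hρle2
  -- the orthogonal conjugation
  set Q : Matrix (Fin c × Fin n) (Fin c × Fin n) ℝ := V ⊗ₖ Uᵀ with hQdef
  set d : Fin c × Fin n → ℝ := fun p => ν p.1 * g (lam p.2) with hd
  set j0 : Fin c × Fin n := (k₀, i₀) with hj0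
  have hQt : Qᵀ = Vᵀ ⊗ₖ U := by
    rw [hQdef, ← Matrix.kroneckerMap_transpose, Matrix.transpose_transpose]
  have hQorth : Qᵀ * Q = 1 := by
    rw [hQt, hQdef, ← Matrix.mul_kronecker_mul, hVtV, hUUt, Matrix.one_kronecker_one]
  have hQQt : Q * Qᵀ = 1 := mul_eq_one_comm.mp hQorth
  have hMQ : M = Q * Matrix.diagonal d * Qᵀ := by
    rw [hM, hspec, hQt, hQdef, Matrix.mul_kronecker_mul, Matrix.mul_kronecker_mul,
      Matrix.diagonal_kronecker_diagonal]
    try simp only [hd, hg]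
  set y : Fin c × Fin n → ℝ := Qᵀ *ᵥ x₀ with hy
  have hcolQ : Q *ᵥ Pi.single j0 1 = (ε₁ * ε₂) • vecKron φ uρ := by
    rw [hj0, single_eq_vecKron, hQdef, kron_mulVec, hε₁, hε₂, vecKron_smul_left,
      vecKron_smul_right, smul_smul]
  have hyj0 : y j0 = (ε₁ * ε₂) * (x₀ ⬝ᵥ vecKron φ uρ) := by
    have h1 : y j0 = (Q *ᵥ Pi.single j0 1) ⬝ᵥ x₀ := by
      rw [hy, Matrix.mulVec_single]
      simp [Matrix.mulVec, dotProduct, Matrix.transpose_apply]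
    rw [h1, hcolQ, smul_dotProduct, dotProduct_comm]
    rfl
  have hyne : y j0 ≠ 0 := by
    rw [hyj0]
    apply mul_ne_zero _ hx₀
    rcases hε₁pm with h | h <;> rcases hε₂pm with h' | h' <;> rw [h, h'] <;> norm_num
  have hdj0 : d j0 = ω * g ρ := by
    simp only [hd, hj0]
    rw [hνk₀, hi₀]
  have hdpos : 0 < d j0 := hdj0 ▸ mul_pos hωpos (hgpos ρ)
  have hdom : ∀ j, j ≠ j0 → |d j| < d j0 := by
    intro j hj
    rw [hdj0]
    simp only [hd]
    rw [abs_mul, abs_of_pos (hgpos (lam j.2))]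
    by_cases hk : j.1 = k₀
    · have hi : j.2 ≠ i₀ := by
        intro h2; exact hj (by rw [hj0]; exact Prod.ext hk h2)
      rw [hk, hνk₀, abs_of_pos hωpos]
      exact mul_lt_mul_of_pos_left (hglt _ hi) hωpos
    · have h1 := hνdom j.1 hk
      have h2 := hgle j.2
      have h3 := hgpos (lam j.2)
      have h4 := abs_nonneg (ν j.1)
      nlinarith
  -- the iterates through the conjugation
  have hmulvec : ∀ m : ℕ, (M ^ m) *ᵥ x₀ = Q *ᵥ (fun j => d j ^ m * y j) := by
    intro m
    have hin : (Matrix.diagonal fun j => d j ^ m) *ᵥ (Qᵀ *ᵥ x₀) = fun j => d j ^ m * y j := by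
      funext j
      rw [Matrix.mulVec_diagonal, hy]
    rw [hMQ, myConjPow Q d hQQt m, ← Matrix.mulVec_mulVec, ← Matrix.mulVec_mulVec, hin]
  have hcore := power_iter d y j0 hdpos hdom hyne
  set vlim : Fin c × Fin n → ℝ := Pi.single j0 (y j0) with hvl
  set hlim : Fin c × Fin n → ℝ := (euclNorm vlim)⁻¹ • vlim with hhl
  have hfinal : Tendsto (fun m : ℕ => (euclNorm ((M ^ m) *ᵥ x₀))⁻¹ • ((M ^ m) *ᵥ x₀))
      atTop (nhds (Q *ᵥ hlim)) := by
    have h2 : Tendsto (fun m : ℕ =>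
        Q *ᵥ ((euclNorm (fun j => d j ^ m * y j))⁻¹ • (fun j => d j ^ m * y j)))
        atTop (nhds (Q *ᵥ hlim)) := ((continuous_mulVec Q).tendsto _).comp hcore
    refine h2.congr fun m => ?_
    have hw : euclNorm (fun j => d j ^ m * y j) = euclNorm ((M ^ m) *ᵥ x₀) := by
      rw [hmulvec m, euclNorm_mulVec hQorth]
    rw [Matrix.mulVec_smul, ← hmulvec m, hw]
  have hsingle : (Pi.single j0 (y j0) : Fin c × Fin n → ℝ) = (y j0) • (Pi.single j0 1 : Fin c × Fin n → ℝ) := by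
    funext p; simp [Pi.single_apply, mul_ite]
  set σ : ℝ := |y j0|⁻¹ * (y j0) * (ε₁ * ε₂) with hσ
  have hQlim : Q *ᵥ hlim = σ • vecKron φ uρ := by
    rw [hhl, hvl, euclNorm_single, hsingle, Matrix.mulVec_smul, Matrix.mulVec_smul, hcolQ,
      smul_smul, smul_smul, hσ, mul_assoc]
  have hσpm : σ = 1 ∨ σ = -1 := by
    have hs0 : |y j0|⁻¹ * y j0 = 1 ∨ |y j0|⁻¹ * y j0 = -1 := by
      rcases lt_or_gt_of_ne hyne with h | h
      · right; rw [abs_of_neg h]; field_simp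
      · left; rw [abs_of_pos h]; field_simp
    rcases hs0 with h | h <;> rcases hε₁pm with h1 | h1 <;> rcases hε₂pm with h2 | h2 <;>
      rw [hσ, h, h1, h2] <;> norm_num
  refine ⟨σ • vecKron φ uρ, ?_, ?_, ?_⟩
  · rcases hσpm with h | h <;> rw [h]
    · left; rw [one_smul]
    · right; rw [neg_one_smul]
  · rw [Matrix.mulVec_smul, kron_mulVec, Matrix.one_mulVec, huρeig, vecKron_smul_right]
    exact smul_comm σ ρ _
  · rw [← hQlim]; exact hfinal
end
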